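/- The number of connected components (regions) of the complement of m hyperplanes through the origin in ℝᵈ is at most 2 · Σ_{i=0}^{d−1} C(m−1, i). -/

import Mathlib

/-!
Each region of a central arrangement lies in a single cell of constant sign vector
`(sign ⟪aᵢ, x⟫)ᵢ`, and these cells are convex, so regions correspond bijectively to the sign
vectors that occur off the hyperplanes. To count those, delete the hyperplane `a₀ᗮ`: a sign
vector of the smaller arrangement extends in two ways only if both extensions occur, and then
the segment joining two witnesses crosses `a₀ᗮ` at a point realising it in the arrangement
induced on `a₀ᗮ`, which has dimension one less. Hence `r(m, d) ≤ r(m - 1, d) + r(m - 1, d - 1)`,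
and Pascal's rule gives the bound.
-/

open scoped RealInnerProductSpace
open Finset Module

lemma Nat.sum_range_succ_choose_succ (n k : ℕ) :
    ∑ i ∈ range (k + 1), (n + 1).choose i =
      ∑ i ∈ range (k + 1), n.choose i + ∑ i ∈ range k, n.choose i := by
  rw [sum_range_succ' (fun i => (n + 1).choose i), sum_range_succ' (fun i => n.choose i)]
  simp only [Nat.choose_succ_succ, sum_add_distrib, Nat.choose_zero_right]
  ring

lemma Set.ncard_le_ncard_image_tail_add {α : Type*} [Finite α] {n : ℕ}
    {S : Set (Fin (n + 1) → α)} {b c : α} (hS : ∀ σ ∈ S, σ 0 = b ∨ σ 0 = c) :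
    S.ncard ≤ (Fin.tail '' S).ncard +
      {τ : Fin n → α | (Fin.cons b τ : Fin (n + 1) → α) ∈ S ∧ Fin.cons c τ ∈ S}.ncard := by
  set T : α → Set (Fin n → α) := fun e => {τ | (Fin.cons e τ : Fin (n + 1) → α) ∈ S}
  have hcover : S ⊆ Fin.cons b '' T b ∪ Fin.cons c '' T c := by
    intro σ hσ
    rcases hS σ hσ with h | h
    · exact .inl ⟨Fin.tail σ, by simpa [T, ← h] using hσ, by simp [← h]⟩
    · exact .inr ⟨Fin.tail σ, by simpa [T, ← h] using hσ, by simp [← h]⟩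
  have htail : T b ∪ T c ⊆ Fin.tail '' S := by
    rintro τ (hτ | hτ) <;> exact ⟨_, hτ, Fin.tail_cons _ _⟩
  calc S.ncard ≤ (Fin.cons b '' T b ∪ Fin.cons c '' T c).ncard := Set.ncard_le_ncard hcover
    _ ≤ (T b).ncard + (T c).ncard :=
      (Set.ncard_union_le _ _).trans (add_le_add Set.ncard_image_le Set.ncard_image_le)
    _ = (T b ∪ T c).ncard + (T b ∩ T c).ncard := (Set.ncard_union_add_ncard_inter _ _).symm
    _ ≤ _ := add_le_add (Set.ncard_le_ncard htail) le_rfl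

lemma Nat.card_connectedComponents_eq_card_range {X Y : Type*} [TopologicalSpace X]
    [TopologicalSpace Y] [TotallyDisconnectedSpace Y] {f : X → Y} (hf : Continuous f)
    (h : ∀ x y, f x = f y → y ∈ connectedComponent x) :
    Nat.card (ConnectedComponents X) = Nat.card (Set.range f) := by
  have hinj : Function.Injective hf.connectedComponentsLift := by
    intro c₁ c₂ hc
    obtain ⟨x, rfl⟩ := ConnectedComponents.surjective_coe c₁
    obtain ⟨y, rfl⟩ := ConnectedComponents.surjective_coe c₂
    simp only [hf.connectedComponentsLift_apply_coe] at hc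
    exact ConnectedComponents.coe_eq_coe.2 (connectedComponent_eq (h x y hc))
  rw [Nat.card_congr (Equiv.ofInjective _ hinj),
    ← ConnectedComponents.surjective_coe.range_comp, hf.connectedComponentsLift_comp_coe]

namespace CentralArrangement

variable {E : Type*} [NormedAddCommGroup E] [InnerProductSpace ℝ E] {ι : Type*}

def complement (a : ι → E) : Set E := {x | ∀ i, ⟪a i, x⟫ ≠ 0}

noncomputable def signVector (a : ι → E) (x : E) : ι → SignType :=
  fun i => SignType.sign ⟪a i, x⟫

noncomputable def regionSigns (a : ι → E) : Set (ι → SignType) := signVector a '' complement a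

lemma convex_setOf_sign_inner_eq (v : E) (s : SignType) :
    Convex ℝ {x : E | SignType.sign ⟪v, x⟫ = s} := by
  have hlin : IsLinearMap ℝ fun x : E => ⟪v, x⟫ := (innerₛₗ ℝ v).isLinear
  obtain rfl | rfl | rfl := s.trichotomy
  · simpa only [sign_eq_neg_one_iff] using convex_halfSpace_lt hlin 0
  · simpa only [sign_eq_zero_iff] using convex_hyperplane hlin 0
  · simpa only [sign_eq_one_iff] using convex_halfSpace_gt hlin 0

lemma convex_signVector_preimage (a : ι → E) (σ : ι → SignType) :
    Convex ℝ (signVector a ⁻¹' {σ}) := by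
  have : signVector a ⁻¹' {σ} = ⋂ i, {x | SignType.sign ⟪a i, x⟫ = σ i} := by
    ext x; simp [signVector, funext_iff]
  rw [this]
  exact convex_iInter fun i => convex_setOf_sign_inner_eq (a i) (σ i)

lemma segment_subset_signVector_preimage (a : ι → E) {x y : E}
    (h : signVector a x = signVector a y) :
    segment ℝ x y ⊆ signVector a ⁻¹' {signVector a x} :=
  (convex_signVector_preimage a _).segment_subset rfl h.symm

lemma signVector_preimage_subset_complement (a : ι → E) {x : E} (hx : x ∈ complement a) :
    signVector a ⁻¹' {signVector a x} ⊆ complement a := fun z hz i h0 => by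
  have hi := congrFun hz i
  simp only [signVector, h0, sign_zero] at hi
  exact hx i (sign_eq_zero_iff.1 hi.symm)

lemma continuous_signVector_restrict (a : ι → E) :
    Continuous fun x : complement a => signVector a x :=
  continuous_pi fun i => continuous_iff_continuousAt.2 fun x =>
    ContinuousAt.comp (f := fun y : complement a => ⟪a i, (y : E)⟫)
      (continuousAt_sign_of_ne_zero (x.2 i)) (by fun_prop)

lemma mem_connectedComponent_of_signVector_eq (a : ι → E) {x y : complement a}
    (h : signVector a x = signVector a y) : y ∈ connectedComponent x := by
  have hseg : segment ℝ x.1 y ⊆ complement a :=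
    (segment_subset_signVector_preimage a h).trans
      (signVector_preimage_subset_complement a x.2)
  have hy := (convex_segment (x : E) y).isPreconnected.subset_connectedComponentIn
    (left_mem_segment ℝ _ _) hseg (right_mem_segment ℝ _ _)
  rw [connectedComponentIn_eq_image x.2] at hy
  obtain ⟨z, hz, hzy⟩ := hy
  rwa [← Subtype.ext hzy]

lemma card_connectedComponents_eq (a : ι → E) :
    Nat.card (ConnectedComponents (complement a)) = (regionSigns a).ncard := by
  rw [Nat.card_connectedComponents_eq_card_range (continuous_signVector_restrict a)
    fun _ _ => mem_connectedComponent_of_signVector_eq a, regionSigns, Set.image_eq_range,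
    Nat.card_coe_set_eq]

lemma eq_one_or_eq_neg_one_of_mem_regionSigns {a : ι → E} {σ : ι → SignType}
    (hσ : σ ∈ regionSigns a) (i : ι) : σ i = 1 ∨ σ i = -1 := by
  obtain ⟨x, hx, rfl⟩ := hσ
  rcases (hx i).lt_or_gt with h | h
  · exact .inr (sign_eq_neg_one_iff.2 h)
  · exact .inl (sign_eq_one_iff.2 h)

lemma regionSigns_eq_empty_of_eq_zero {a : ι → E} {i : ι} (h : a i = 0) : regionSigns a = ∅ :=
  Set.image_eq_empty.2 <| Set.eq_empty_of_forall_notMem fun x hx => hx i (by simp [h])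

lemma image_tail_regionSigns_subset {n : ℕ} (a : Fin (n + 1) → E) :
    Fin.tail '' regionSigns a ⊆ regionSigns (Fin.tail a) := by
  rintro _ ⟨_, ⟨x, hx, rfl⟩, rfl⟩
  exact ⟨x, fun i => hx i.succ, rfl⟩

/-- The arrangement induced on the hyperplane `(a 0)ᗮ`: on that hyperplane, `⟪a i, x⟫` equals
`⟪(a i)', x⟫` for the projection `(a i)'` of `a i`. -/
noncomputable def restrict {n : ℕ} (a : Fin (n + 1) → E) : Fin n → (ℝ ∙ a 0)ᗮ :=
  fun i => (ℝ ∙ a 0)ᗮ.orthogonalProjectionOnto (a i.succ)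

lemma exists_mem_complement_inner_eq_zero {n : ℕ} {a : Fin (n + 1) → E} {τ : Fin n → SignType}
    (hpos : Fin.cons 1 τ ∈ regionSigns a) (hneg : Fin.cons (-1) τ ∈ regionSigns a) :
    ∃ z ∈ complement (Fin.tail a), ⟪a 0, z⟫ = 0 ∧ signVector (Fin.tail a) z = τ := by
  obtain ⟨x, hx, hxσ⟩ := hpos
  obtain ⟨y, hy, hyσ⟩ := hneg
  have hx0 : 0 < ⟪a 0, x⟫ := sign_eq_one_iff.1 (by simpa [signVector] using congrFun hxσ 0)
  have hy0 : ⟪a 0, y⟫ < 0 := sign_eq_neg_one_iff.1 (by simpa [signVector] using congrFun hyσ 0)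
  have hxτ : signVector (Fin.tail a) x = τ := (congrArg Fin.tail hxσ).trans (Fin.tail_cons _ _)
  have hyτ : signVector (Fin.tail a) y = τ := (congrArg Fin.tail hyσ).trans (Fin.tail_cons _ _)
  obtain ⟨z, hz, hz0⟩ := (convex_segment y x).isPreconnected.intermediate_value
    (left_mem_segment ℝ y x) (right_mem_segment ℝ y x) (by fun_prop : Continuous _).continuousOn
    (show (0 : ℝ) ∈ Set.Icc ⟪a 0, y⟫ ⟪a 0, x⟫ from ⟨hy0.le, hx0.le⟩)
  have hzτ := segment_subset_signVector_preimage (Fin.tail a) (hyτ.trans hxτ.symm) hz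
  refine ⟨z, signVector_preimage_subset_complement _ (fun i : Fin n => hy i.succ) hzτ, hz0, ?_⟩
  rw [hzτ, hyτ]

lemma signVector_mem_regionSigns_orthogonalProjectionOnto (K : Submodule ℝ E)
    [K.HasOrthogonalProjection] (b : ι → E) {z : E} (hzK : z ∈ K) (hz : z ∈ complement b) :
    signVector b z ∈ regionSigns fun i => K.orthogonalProjectionOnto (b i) :=
  ⟨⟨z, hzK⟩, by simpa [complement] using hz, by
    ext i
    simp [signVector]⟩

lemma ncard_regionSigns_le_add {n : ℕ} (a : Fin (n + 1) → E) :
    (regionSigns a).ncard ≤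
      (regionSigns (Fin.tail a)).ncard + (regionSigns (restrict a)).ncard := by
  refine (Set.ncard_le_ncard_image_tail_add fun σ hσ =>
    eq_one_or_eq_neg_one_of_mem_regionSigns hσ 0).trans (add_le_add ?_ ?_)
  · exact Set.ncard_le_ncard (image_tail_regionSigns_subset a)
  · refine Set.ncard_le_ncard fun τ ⟨hpos, hneg⟩ => ?_
    obtain ⟨z, hz, hz0, rfl⟩ := exists_mem_complement_inner_eq_zero hpos hneg
    exact signVector_mem_regionSigns_orthogonalProjectionOnto _ _
      (Submodule.mem_orthogonal_singleton_iff_inner_right.2 hz0) hz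

lemma ncard_regionSigns_le [FiniteDimensional ℝ E] {n : ℕ} (a : Fin (n + 1) → E) :
    (regionSigns a).ncard ≤ 2 * ∑ i ∈ range (finrank ℝ E), n.choose i := by
  induction n generalizing E with
  | zero =>
    rcases eq_or_ne (a 0) 0 with h0 | h0
    · simp [regionSigns_eq_empty_of_eq_zero h0]
    have : Nontrivial E := ⟨⟨a 0, 0, h0⟩⟩
    obtain ⟨k, hk⟩ := Nat.exists_eq_add_one_of_ne_zero (finrank_pos (R := ℝ) (M := E)).ne'
    calc (regionSigns a).ncard ≤ 1 + 1 := (ncard_regionSigns_le_add a).trans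
          (add_le_add (Set.ncard_le_one_of_subsingleton _) (Set.ncard_le_one_of_subsingleton _))
      _ = _ := by simp [hk, sum_range_succ']
  | succ n ih =>
    rcases eq_or_ne (a 0) 0 with h0 | h0
    · simp [regionSigns_eq_empty_of_eq_zero h0]
    have hK : finrank ℝ (ℝ ∙ a 0)ᗮ + 1 = finrank ℝ E := by
      have := (ℝ ∙ a 0).finrank_add_finrank_orthogonal
      rw [finrank_span_singleton h0] at this
      omega
    calc (regionSigns a).ncard
        ≤ 2 * ∑ i ∈ range (finrank ℝ E), n.choose i +
            2 * ∑ i ∈ range (finrank ℝ (ℝ ∙ a 0)ᗮ), n.choose i :=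
          (ncard_regionSigns_le_add a).trans (add_le_add (ih _) (ih _))
      _ = 2 * ∑ i ∈ range (finrank ℝ E), (n + 1).choose i := by
          rw [← hK, Nat.sum_range_succ_choose_succ]
          ring

end CentralArrangement

theorem stmt_2_general {d m : ℕ} (a : Fin m → EuclideanSpace ℝ (Fin d)) (hm : 0 < m) :
    Nat.card (ConnectedComponents
      {x : EuclideanSpace ℝ (Fin d) // ∀ i : Fin m, ⟪a i, x⟫ ≠ 0}) ≤
      2 * ∑ i ∈ Finset.range d, (m - 1).choose i := by
  obtain ⟨n, rfl⟩ : ∃ n, m = n + 1 := ⟨m - 1, by omega⟩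
  have h := (CentralArrangement.card_connectedComponents_eq a).trans_le
    (CentralArrangement.ncard_regionSigns_le a)
  rwa [finrank_euclideanSpace_fin] at h

/-- The complement of `m` central hyperplanes in `ℝᵈ` has at most
`2 * ∑_{i=0}^{d-1} C(m-1, i)` connected components (regions). -/
theorem stmt_2 {d m : ℕ} (a : Fin m → EuclideanSpace ℝ (Fin d)) (hm : 0 < m) (ha : ∀ i, a i ≠ 0) :
    Nat.card (ConnectedComponents
      {x : EuclideanSpace ℝ (Fin d) // ∀ i : Fin m, ⟪a i, x⟫ ≠ 0}) ≤
      2 * ∑ i ∈ Finset.range d, (m - 1).choose i :=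
  stmt_2_general a hm
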